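/- arXiv:math/0405548 — 4 statements merged into one kernel-verified Lean document; each statement's English description precedes it below -/
import Mathlib

section
/- Let p, p* : ℝⁿ \ {0} → ℝ be smooth, positive, positively homogeneous of degree 1 functions satisfying p*(∇p(ξ)) = 1 for all ξ with p(ξ) = 1, and suppose for every ξ ≠ 0 that Ker ∇²p(ξ) = span{ξ}. Then ∇p*(∇p(ξ)) = ξ / p(ξ) for all ξ ≠ 0. -/
/-- The gradient of `p` at `ξ`, as a vector of partial derivatives. -/
noncomputable def pgrad {n : ℕ} (p : (Fin n → ℝ) → ℝ) (ξ : Fin n → ℝ) : Fin n → ℝ :=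
  fun i => fderiv ℝ p ξ (Pi.single i 1)

/-- The Hessian matrix `(∂_i ∂_j p)(ξ)`. -/
noncomputable def phess {n : ℕ} (p : (Fin n → ℝ) → ℝ) (ξ : Fin n → ℝ) :
    Matrix (Fin n) (Fin n) ℝ :=
  Matrix.of fun i j => fderiv ℝ (fun x => pgrad p x j) ξ (Pi.single i 1)

/-- Expand a continuous linear functional on `Fin n → ℝ` in the standard basis. -/
lemma clm_apply_eq_sum {n : ℕ} (L : (Fin n → ℝ) →L[ℝ] ℝ) (v : Fin n → ℝ) :
    L v = ∑ i, v i * L (Pi.single i 1) := by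
  have hv : v = ∑ i, v i • (Pi.single i 1 : Fin n → ℝ) := by
    ext j
    simp [Pi.single_apply]
  conv_lhs => rw [hv]
  rw [map_sum]
  simp [smul_eq_mul]

/-- Euler's identity for a positively 1-homogeneous differentiable function. -/
lemma euler_id {n : ℕ} {f : (Fin n → ℝ) → ℝ} {ξ : Fin n → ℝ}
    (hf : DifferentiableAt ℝ f ξ)
    (hhom : ∀ c : ℝ, 0 < c → f (c • ξ) = c * f ξ) :
    fderiv ℝ f ξ ξ = f ξ := by
  have h1 : HasDerivAt (fun c : ℝ => c • ξ) ξ 1 := by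
    simpa using (hasDerivAt_id (1:ℝ)).smul_const ξ
  have h2 : HasDerivAt (fun c : ℝ => f (c • ξ)) (fderiv ℝ f ξ ξ) 1 := by
    have hf' : HasFDerivAt f (fderiv ℝ f ξ) ((1:ℝ) • ξ) := by
      rw [one_smul]; exact hf.hasFDerivAt
    exact hf'.comp_hasDerivAt 1 h1
  have h3 : (fun c : ℝ => f (c • ξ)) =ᶠ[nhds (1:ℝ)] (fun c => c * f ξ) := by
    filter_upwards [Ioi_mem_nhds (by norm_num : (0:ℝ) < 1)] with c hc
    exact hhom c hc
  have h4 : HasDerivAt (fun c : ℝ => c * f ξ) (f ξ) 1 := by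
    simpa using (hasDerivAt_id (1:ℝ)).mul_const (f ξ)
  exact (h2.congr_of_eventuallyEq h3.symm).unique h4

/-- The gradient of a positively 1-homogeneous function is 0-homogeneous. -/
lemma fderiv_hom {n : ℕ} {f : (Fin n → ℝ) → ℝ}
    (hdiff : ∀ x : Fin n → ℝ, x ≠ 0 → DifferentiableAt ℝ f x)
    (hhom : ∀ c : ℝ, 0 < c → ∀ x : Fin n → ℝ, x ≠ 0 → f (c • x) = c * f x)
    {ξ : Fin n → ℝ} (hξ : ξ ≠ 0) {c : ℝ} (hc : 0 < c) :
    fderiv ℝ f (c • ξ) = fderiv ℝ f ξ := by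
  have hcξ : c • ξ ≠ 0 := smul_ne_zero (ne_of_gt hc) hξ
  have hsc : HasFDerivAt (fun x : Fin n → ℝ => c • x)
      (c • ContinuousLinearMap.id ℝ (Fin n → ℝ)) ξ :=
    (c • ContinuousLinearMap.id ℝ (Fin n → ℝ)).hasFDerivAt
  have h1 : HasFDerivAt (fun x : Fin n → ℝ => f (c • x))
      ((fderiv ℝ f (c • ξ)).comp (c • ContinuousLinearMap.id ℝ (Fin n → ℝ))) ξ :=
    (hdiff _ hcξ).hasFDerivAt.comp ξ hsc
  have h2 : HasFDerivAt (fun x : Fin n → ℝ => c * f x) (c • fderiv ℝ f ξ) ξ :=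
    (hdiff ξ hξ).hasFDerivAt.const_mul c
  have heq : (fun x : Fin n → ℝ => f (c • x)) =ᶠ[nhds ξ] (fun x => c * f x) := by
    filter_upwards [IsOpen.mem_nhds isOpen_ne hξ] with x hx
    exact hhom c hc x hx
  have huniq : (fderiv ℝ f (c • ξ)).comp (c • ContinuousLinearMap.id ℝ (Fin n → ℝ))
      = c • fderiv ℝ f ξ := (h1.congr_of_eventuallyEq heq.symm).unique h2
  ext v
  have := congrArg (fun L : (Fin n → ℝ) →L[ℝ] ℝ => L v) huniq
  simp only [ContinuousLinearMap.comp_apply, ContinuousLinearMap.smul_apply,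
    ContinuousLinearMap.id_apply, map_smul, smul_eq_mul] at this
  exact mul_left_cancel₀ (ne_of_gt hc) this

/-- If `p, p*` are smooth, positive, positively homogeneous of degree 1 with `p*(∇p(ξ)) = 1`
whenever `p(ξ) = 1`, and `Ker ∇²p(ξ) = span{ξ}` for every `ξ ≠ 0`, then
`∇p*(∇p(ξ)) = ξ / p(ξ)` for all `ξ ≠ 0`. -/
theorem stmt2 {n : ℕ} (hn : 2 ≤ n) (p pstar : (Fin n → ℝ) → ℝ)
    (hsmooth : ContDiffOn ℝ (⊤ : ℕ∞) p {ξ : Fin n → ℝ | ξ ≠ 0})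
    (hsmooth' : ContDiffOn ℝ (⊤ : ℕ∞) pstar {ξ : Fin n → ℝ | ξ ≠ 0})
    (hpos : ∀ ξ : Fin n → ℝ, ξ ≠ 0 → 0 < p ξ)
    (hpos' : ∀ ξ : Fin n → ℝ, ξ ≠ 0 → 0 < pstar ξ)
    (hhom : ∀ c : ℝ, 0 < c → ∀ ξ : Fin n → ℝ, ξ ≠ 0 → p (c • ξ) = c * p ξ)
    (hhom' : ∀ c : ℝ, 0 < c → ∀ ξ : Fin n → ℝ, ξ ≠ 0 → pstar (c • ξ) = c * pstar ξ)
    (hone : ∀ ξ : Fin n → ℝ, ξ ≠ 0 → p ξ = 1 → pstar (pgrad p ξ) = 1)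
    (hker : ∀ ξ : Fin n → ℝ, ξ ≠ 0 →
      {x : Fin n → ℝ | Matrix.vecMul x (phess p ξ) = 0} =
        (Submodule.span ℝ {ξ} : Submodule ℝ (Fin n → ℝ))) :
    ∀ ξ : Fin n → ℝ, ξ ≠ 0 → pgrad pstar (pgrad p ξ) = (p ξ)⁻¹ • ξ := by
  have hUopen : IsOpen {ξ : Fin n → ℝ | ξ ≠ 0} := isOpen_ne
  have hdiffp : ∀ x : Fin n → ℝ, x ≠ 0 → DifferentiableAt ℝ p x := fun x hx =>
    (hsmooth.contDiffAt (hUopen.mem_nhds hx)).differentiableAt (by simp)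
  have hdiffq : ∀ x : Fin n → ℝ, x ≠ 0 → DifferentiableAt ℝ pstar x := fun x hx =>
    (hsmooth'.contDiffAt (hUopen.mem_nhds hx)).differentiableAt (by simp)
  -- pstar (pgrad p ξ) = 1 for all ξ ≠ 0
  have hone' : ∀ ξ : Fin n → ℝ, ξ ≠ 0 → pstar (pgrad p ξ) = 1 := by
    intro ξ hξ
    have hc : (0:ℝ) < (p ξ)⁻¹ := inv_pos.mpr (hpos ξ hξ)
    have hξ' : (p ξ)⁻¹ • ξ ≠ 0 := smul_ne_zero (ne_of_gt hc) hξ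
    have hp1 : p ((p ξ)⁻¹ • ξ) = 1 := by
      rw [hhom _ hc ξ hξ, inv_mul_cancel₀ (ne_of_gt (hpos ξ hξ))]
    have hgr : pgrad p ((p ξ)⁻¹ • ξ) = pgrad p ξ := by
      unfold pgrad
      rw [fderiv_hom hdiffp hhom hξ hc]
    rw [← hgr]
    exact hone _ hξ' hp1
  intro ξ hξ
  -- the gradient η := pgrad p ξ
  set η := pgrad p ξ with hη
  -- Euler for p
  have heulerp : fderiv ℝ p ξ ξ = p ξ := euler_id (hdiffp ξ hξ) (fun c hc => hhom c hc ξ hξ)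
  have hηξ : ∑ j, ξ j * η j = p ξ := by
    rw [← heulerp]; exact (clm_apply_eq_sum (fderiv ℝ p ξ) ξ).symm
  have hηne : η ≠ 0 := by
    intro h0
    have : fderiv ℝ p ξ ξ = 0 := by
      rw [clm_apply_eq_sum]
      apply Finset.sum_eq_zero
      intro j _
      have : η j = 0 := by rw [h0]; rfl
      simp only [hη, pgrad] at this
      rw [this, mul_zero]
    rw [heulerp] at this
    exact absurd this (ne_of_gt (hpos ξ hξ))
  -- second derivative
  have hp2 : ContDiffAt ℝ 2 p ξ :=
    (hsmooth.contDiffAt (hUopen.mem_nhds hξ)).of_le (WithTop.coe_le_coe.mpr le_top)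
  have hF : DifferentiableAt ℝ (fderiv ℝ p) ξ :=
    (hp2.fderiv_right (m := 1) (by norm_num)).differentiableAt (by norm_num)
  set F' := fderiv ℝ (fderiv ℝ p) ξ with hF'
  -- Hessian entries
  have hhess : ∀ i j, phess p ξ i j = F' (Pi.single i 1) (Pi.single j 1) := by
    intro i j
    have hcomp : HasFDerivAt (fun x => fderiv ℝ p x (Pi.single j 1))
        ((ContinuousLinearMap.apply ℝ ℝ (Pi.single j 1)).comp F') ξ := by
      have h := (ContinuousLinearMap.apply ℝ ℝ (Pi.single j 1)).hasFDerivAt.comp ξ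
        hF.hasFDerivAt
      exact h
    have : fderiv ℝ (fun x => fderiv ℝ p x (Pi.single j 1)) ξ =
        (ContinuousLinearMap.apply ℝ ℝ (Pi.single j 1)).comp F' := hcomp.fderiv
    show fderiv ℝ (fun x => pgrad p x j) ξ (Pi.single i 1) = _
    unfold pgrad
    rw [this]
    rfl
  -- symmetry of the second derivative
  have hsymm : ∀ v w, F' v w = F' w v := by
    apply second_derivative_symmetric_of_eventually (f := p) (x := ξ)
    · filter_upwards [hUopen.mem_nhds hξ] with y hy
      exact (hdiffp y hy).hasFDerivAt
    · exact hF.hasFDerivAt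
  -- the gradient map pgrad p as π ∘ fderiv p
  set π : ((Fin n → ℝ) →L[ℝ] ℝ) →L[ℝ] (Fin n → ℝ) :=
    ContinuousLinearMap.pi (fun j => ContinuousLinearMap.apply ℝ ℝ (Pi.single j 1)) with hπ
  have hgradF : HasFDerivAt (pgrad p) (π.comp F') ξ := by
    have : HasFDerivAt (fun x => π (fderiv ℝ p x)) (π.comp F') ξ :=
      π.hasFDerivAt.comp ξ hF.hasFDerivAt
    exact this.congr_of_eventuallyEq (Filter.Eventually.of_forall fun x => rfl)
  -- the composite g = pstar ∘ pgrad p has zero derivative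
  have hg : HasFDerivAt (fun x => pstar (pgrad p x))
      ((fderiv ℝ pstar η).comp (π.comp F')) ξ :=
    (hdiffq η hηne).hasFDerivAt.comp ξ hgradF
  have hzero : (fderiv ℝ pstar η).comp (π.comp F') = 0 := by
    have hgeq : (fun x => pstar (pgrad p x)) =ᶠ[nhds ξ] (fun _ => (1:ℝ)) := by
      filter_upwards [hUopen.mem_nhds hξ] with x hx
      exact hone' x hx
    exact (hg.congr_of_eventuallyEq hgeq.symm).unique (hasFDerivAt_const 1 ξ)
  -- w := pgrad pstar η satisfies w ⬝ hess = 0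
  set w := pgrad pstar η with hw
  have hrow : ∀ i, ∑ j, F' (Pi.single i 1) (Pi.single j 1) * w j = 0 := by
    intro i
    have := congrArg (fun L : (Fin n → ℝ) →L[ℝ] ℝ => L (Pi.single i 1)) hzero
    simp only [ContinuousLinearMap.comp_apply, ContinuousLinearMap.zero_apply] at this
    rw [clm_apply_eq_sum (fderiv ℝ pstar η) (π (F' (Pi.single i 1)))] at this
    have hπval : ∀ j, (π (F' (Pi.single i 1))) j = F' (Pi.single i 1) (Pi.single j 1) :=
      fun j => rfl
    calc ∑ j, F' (Pi.single i 1) (Pi.single j 1) * w j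
        = ∑ j, (π (F' (Pi.single i 1))) j * fderiv ℝ pstar η (Pi.single j 1) := by
          apply Finset.sum_congr rfl
          intro j _
          rw [hπval j]
          rfl
      _ = 0 := this
  have hker' : Matrix.vecMul w (phess p ξ) = 0 := by
    funext j
    simp only [Matrix.vecMul, dotProduct]
    calc ∑ i, w i * phess p ξ i j
        = ∑ i, F' (Pi.single j 1) (Pi.single i 1) * w i := by
          apply Finset.sum_congr rfl
          intro i _
          rw [hhess i j, hsymm (Pi.single i 1) (Pi.single j 1), mul_comm]
      _ = 0 := hrow j
  -- membership in span
  have hmem : w ∈ (Submodule.span ℝ {ξ} : Submodule ℝ (Fin n → ℝ)) := by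
    have : w ∈ {x : Fin n → ℝ | Matrix.vecMul x (phess p ξ) = 0} := hker'
    rw [hker ξ hξ] at this
    exact this
  obtain ⟨a, ha⟩ := Submodule.mem_span_singleton.mp hmem
  -- Euler for pstar at η
  have heulerq : fderiv ℝ pstar η η = pstar η :=
    euler_id (hdiffq η hηne) (fun c hc => hhom' c hc η hηne)
  have h1 : ∑ j, η j * w j = 1 := by
    have : fderiv ℝ pstar η η = 1 := by rw [heulerq, hone' ξ hξ]
    rw [← this, clm_apply_eq_sum]
    rfl
  -- compute a
  have ha' : a * p ξ = 1 := by
    rw [← hηξ, Finset.mul_sum, ← h1]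
    apply Finset.sum_congr rfl
    intro j _
    have : w j = a * ξ j := by rw [← ha]; simp [smul_eq_mul]
    rw [this]
    ring
  have hpne : p ξ ≠ 0 := ne_of_gt (hpos ξ hξ)
  have haval : a = (p ξ)⁻¹ := by
    calc a = a * (p ξ * (p ξ)⁻¹) := by rw [mul_inv_cancel₀ hpne, mul_one]
      _ = (a * p ξ) * (p ξ)⁻¹ := by ring
      _ = (p ξ)⁻¹ := by rw [ha', one_mul]
  rw [← ha, haval]
end

section
/- Let p ∈ C^∞(ℝⁿ \ {0}) be positive and positively homogeneous of degree 1. Define ψ(ξ) = p(ξ) ∇p(ξ)/|∇p(ξ)| and, given a dual function p* with ∇p*(∇p(ξ)) = ξ/p(ξ) and ∇p(∇p*(η)) = η/p*(η), define φ(η) = |η| ∇p*(η). Then φ(ψ(ξ)) = ξ and ψ(φ(η)) = η for all nonzero ξ, η; in particular ψ : ℝⁿ \ {0} → ℝⁿ \ {0} is a bijection with inverse φ. -/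
/-- The Euclidean norm of a vector in `ℝⁿ`. -/
noncomputable def eucNorm {n : ℕ} (v : Fin n → ℝ) : ℝ :=
  Real.sqrt (∑ i, v i ^ 2)

lemma eucNorm_pos {n : ℕ} {v : Fin n → ℝ} (hv : v ≠ 0) : 0 < eucNorm v := by
  apply Real.sqrt_pos.2
  obtain ⟨i, hi⟩ := Function.ne_iff.1 hv
  exact Finset.sum_pos' (fun j _ => sq_nonneg _) ⟨i, Finset.mem_univ i, by exact pow_pos (abs_pos.2 hi) 2 |>.trans_le (by rw [sq_abs])⟩

lemma eucNorm_smul {n : ℕ} {c : ℝ} (hc : 0 ≤ c) (v : Fin n → ℝ) :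
    eucNorm (c • v) = c * eucNorm v := by
  unfold eucNorm
  have : ∑ i, (c • v) i ^ 2 = c ^ 2 * ∑ i, v i ^ 2 := by
    rw [Finset.mul_sum]; exact Finset.sum_congr rfl fun i _ => by rw [Pi.smul_apply, smul_eq_mul, mul_pow]
  rw [this, Real.sqrt_mul (sq_nonneg c), Real.sqrt_sq hc]

lemma grad_ne_zero {n : ℕ} (p : (Fin n → ℝ) → ℝ)
    (hpos : ∀ ξ : Fin n → ℝ, ξ ≠ 0 → 0 < p ξ)
    (heuler : ∀ ξ : Fin n → ℝ, ξ ≠ 0 → p ξ = ∑ i, pgrad p ξ i * ξ i)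
    {ξ : Fin n → ℝ} (hξ : ξ ≠ 0) : pgrad p ξ ≠ 0 := by
  intro h
  have := hpos ξ hξ
  rw [heuler ξ hξ, h] at this
  simp at this

lemma grad_hom {n : ℕ} (p : (Fin n → ℝ) → ℝ)
    (hsmooth : ContDiffOn ℝ (⊤ : ℕ∞) p {ξ : Fin n → ℝ | ξ ≠ 0})
    (hhom : ∀ c : ℝ, 0 < c → ∀ ξ : Fin n → ℝ, ξ ≠ 0 → p (c • ξ) = c * p ξ)
    {c : ℝ} (hc : 0 < c) {ξ : Fin n → ℝ} (hξ : ξ ≠ 0) :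
    pgrad p (c • ξ) = pgrad p ξ := by
  have hU : IsOpen {ξ : Fin n → ℝ | ξ ≠ 0} := isOpen_ne
  have hdp : ∀ x : Fin n → ℝ, x ≠ 0 → DifferentiableAt ℝ p x := fun x hx =>
    ((hsmooth.contDiffAt (hU.mem_nhds hx)).differentiableAt (by simp))
  have hcξ : c • ξ ≠ 0 := smul_ne_zero hc.ne' hξ
  set L : (Fin n → ℝ) →L[ℝ] (Fin n → ℝ) := c • ContinuousLinearMap.id ℝ (Fin n → ℝ) with hL
  have h1 : HasFDerivAt (fun x => p (c • x)) ((fderiv ℝ p (c • ξ)).comp L) ξ := by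
    have := ((hdp _ hcξ).hasFDerivAt).comp ξ (L.hasFDerivAt)
    simpa [hL, Function.comp_def] using this
  have h2 : HasFDerivAt (fun x => p (c • x)) (c • fderiv ℝ p ξ) ξ := by
    have hh : HasFDerivAt (fun x => c • p x) (c • fderiv ℝ p ξ) ξ :=
      ((hdp ξ hξ).hasFDerivAt).const_smul c
    apply hh.congr_of_eventuallyEq
    filter_upwards [hU.mem_nhds hξ] with x hx
    simp [hhom c hc x hx, smul_eq_mul]
  have heq := h1.unique h2
  funext i
  have := congrArg (fun (T : (Fin n → ℝ) →L[ℝ] ℝ) => T (Pi.single i 1)) heq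
  simp [hL, smul_eq_mul] at this
  unfold pgrad
  exact this.resolve_right hc.ne'

/-- With `ψ(ξ) = p(ξ)∇p(ξ)/|∇p(ξ)|` and `φ(η) = |η|∇p*(η)`, the duality relations imply
`φ(ψ(ξ)) = ξ` and `ψ(φ(η)) = η` for nonzero `ξ, η`; in particular `ψ` is a bijection of
`ℝⁿ \ {0}` onto itself with inverse `φ`. -/
theorem stmt4 {n : ℕ} (hn : 2 ≤ n) (p pstar : (Fin n → ℝ) → ℝ)
    (hsmooth : ContDiffOn ℝ (⊤ : ℕ∞) p {ξ : Fin n → ℝ | ξ ≠ 0})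
    (hsmooth' : ContDiffOn ℝ (⊤ : ℕ∞) pstar {ξ : Fin n → ℝ | ξ ≠ 0})
    (hpos : ∀ ξ : Fin n → ℝ, ξ ≠ 0 → 0 < p ξ)
    (hpos' : ∀ ξ : Fin n → ℝ, ξ ≠ 0 → 0 < pstar ξ)
    (hhom : ∀ c : ℝ, 0 < c → ∀ ξ : Fin n → ℝ, ξ ≠ 0 → p (c • ξ) = c * p ξ)
    (hhom' : ∀ c : ℝ, 0 < c → ∀ ξ : Fin n → ℝ, ξ ≠ 0 → pstar (c • ξ) = c * pstar ξ)
    (heuler : ∀ ξ : Fin n → ℝ, ξ ≠ 0 → p ξ = ∑ i, pgrad p ξ i * ξ i)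
    (heuler' : ∀ η : Fin n → ℝ, η ≠ 0 → pstar η = ∑ i, pgrad pstar η i * η i)
    (hdual : ∀ ξ : Fin n → ℝ, ξ ≠ 0 → pgrad pstar (pgrad p ξ) = (p ξ)⁻¹ • ξ)
    (hdual' : ∀ η : Fin n → ℝ, η ≠ 0 → pgrad p (pgrad pstar η) = (pstar η)⁻¹ • η)
    (hone : ∀ ξ : Fin n → ℝ, ξ ≠ 0 → p ξ = 1 → pstar (pgrad p ξ) = 1)
    (hone' : ∀ η : Fin n → ℝ, η ≠ 0 → pstar η = 1 → p (pgrad pstar η) = 1)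
    (ψ φ : (Fin n → ℝ) → (Fin n → ℝ))
    (hψ : ∀ ξ : Fin n → ℝ, ξ ≠ 0 → ψ ξ = (p ξ / eucNorm (pgrad p ξ)) • pgrad p ξ)
    (hφ : ∀ η : Fin n → ℝ, η ≠ 0 → φ η = eucNorm η • pgrad pstar η) :
    (∀ ξ : Fin n → ℝ, ξ ≠ 0 → φ (ψ ξ) = ξ) ∧
    (∀ η : Fin n → ℝ, η ≠ 0 → ψ (φ η) = η) ∧
    Set.BijOn ψ {ξ : Fin n → ℝ | ξ ≠ 0} {ξ : Fin n → ℝ | ξ ≠ 0} := by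
  have hgne : ∀ ξ : Fin n → ℝ, ξ ≠ 0 → pgrad p ξ ≠ 0 :=
    fun ξ hξ => grad_ne_zero p hpos heuler hξ
  have hgne' : ∀ η : Fin n → ℝ, η ≠ 0 → pgrad pstar η ≠ 0 :=
    fun η hη => grad_ne_zero pstar hpos' heuler' hη
  have hψne : ∀ ξ : Fin n → ℝ, ξ ≠ 0 → ψ ξ ≠ 0 := by
    intro ξ hξ
    rw [hψ ξ hξ]
    exact smul_ne_zero (div_pos (hpos ξ hξ) (eucNorm_pos (hgne ξ hξ))).ne' (hgne ξ hξ)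
  have hφne : ∀ η : Fin n → ℝ, η ≠ 0 → φ η ≠ 0 := by
    intro η hη
    rw [hφ η hη]
    exact smul_ne_zero (eucNorm_pos hη).ne' (hgne' η hη)
  have hleft : ∀ ξ : Fin n → ℝ, ξ ≠ 0 → φ (ψ ξ) = ξ := by
    intro ξ hξ
    have hg := hgne ξ hξ
    have hc : 0 < p ξ / eucNorm (pgrad p ξ) := div_pos (hpos ξ hξ) (eucNorm_pos hg)
    have heucNorm : eucNorm (ψ ξ) = p ξ := by
      rw [hψ ξ hξ, eucNorm_smul hc.le, div_mul_cancel₀ _ (eucNorm_pos hg).ne']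
    have hgrad : pgrad pstar (ψ ξ) = (p ξ)⁻¹ • ξ := by
      rw [hψ ξ hξ, grad_hom pstar hsmooth' hhom' hc hg, hdual ξ hξ]
    rw [hφ (ψ ξ) (hψne ξ hξ), heucNorm, hgrad, smul_smul,
      mul_inv_cancel₀ (hpos ξ hξ).ne', one_smul]
  have hright : ∀ η : Fin n → ℝ, η ≠ 0 → ψ (φ η) = η := by
    intro η hη
    have hh := hgne' η hη
    have he : 0 < eucNorm η := eucNorm_pos hη
    have hps := hpos' η hη
    have hgrad : pgrad p (φ η) = (pstar η)⁻¹ • η := by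
      rw [hφ η hη, grad_hom p hsmooth hhom he hh, hdual' η hη]
    have hph : p (pgrad pstar η) = 1 := by
      rw [heuler _ hh, hdual' η hη]
      have : ∀ i, ((pstar η)⁻¹ • η) i * pgrad pstar η i
          = (pstar η)⁻¹ * (pgrad pstar η i * η i) := by
        intro i; simp [smul_eq_mul]; ring
      rw [Finset.sum_congr rfl fun i _ => this i, ← Finset.mul_sum, ← heuler' η hη,
        inv_mul_cancel₀ hps.ne']
    have hpφ : p (φ η) = eucNorm η := by
      rw [hφ η hη, hhom _ he _ hh, hph, mul_one]
    have henφ : eucNorm (pgrad p (φ η)) = (pstar η)⁻¹ * eucNorm η := by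
      rw [hgrad, eucNorm_smul (inv_pos.2 hps).le]
    rw [hψ (φ η) (hφne η hη), hpφ, henφ, hgrad, smul_smul]
    have hcoef : eucNorm η / ((pstar η)⁻¹ * eucNorm η) * (pstar η)⁻¹ = 1 := by
      field_simp
    rw [hcoef, one_smul]
  refine ⟨hleft, hright, Set.InvOn.bijOn ⟨fun x hx => hleft x hx, fun y hy => hright y hy⟩
    (fun x hx => hψne x hx) (fun y hy => hφne y hy)⟩
end

section
/- Let p, p* be as above and define Ω(x,ξ) = (x ∇²p*(∇p(ξ))) ∧ (p(ξ)∇p(ξ)) ∈ ℝ^{n(n−1)/2}, where a ∧ b = (a_i b_j − a_j b_i)_{i<j}. Assume Ker ∇²p*(η) = span{η} for every η ≠ 0 and that ∇²p*(η) is symmetric (hence diagonalizable). Then for (x,ξ) ∈ ℝⁿ × (ℝⁿ \ {0}), Ω(x,ξ) = 0 if and only if x = λ∇p(ξ) for some λ ∈ ℝ. -/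
/-- The `(i,j)` component of `Ω(x,ξ) = (x ∇²p*(∇p(ξ))) ∧ (p(ξ)∇p(ξ))`, where
`(a ∧ b)_{ij} = a_i b_j − a_j b_i`. -/
noncomputable def Omega {n : ℕ} (p pstar : (Fin n → ℝ) → ℝ)
    (x ξ : Fin n → ℝ) (i j : Fin n) : ℝ :=
  Matrix.vecMul x (phess pstar (pgrad p ξ)) i * (p ξ * pgrad p ξ j) -
    Matrix.vecMul x (phess pstar (pgrad p ξ)) j * (p ξ * pgrad p ξ i)

/-- For dual `p, p*` with `Ker ∇²p*(η) = span{η}` and `∇²p*(η)` symmetric, one has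
`Ω(x,ξ) = 0` iff `x = λ∇p(ξ)` for some `λ ∈ ℝ`. -/
theorem stmt5 {n : ℕ} (hn : 2 ≤ n) (p pstar : (Fin n → ℝ) → ℝ)
    (hsmooth : ContDiffOn ℝ (⊤ : ℕ∞) p {ξ : Fin n → ℝ | ξ ≠ 0})
    (hsmooth' : ContDiffOn ℝ (⊤ : ℕ∞) pstar {ξ : Fin n → ℝ | ξ ≠ 0})
    (hpos : ∀ ξ : Fin n → ℝ, ξ ≠ 0 → 0 < p ξ)
    (hpos' : ∀ ξ : Fin n → ℝ, ξ ≠ 0 → 0 < pstar ξ)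
    (hhom : ∀ c : ℝ, 0 < c → ∀ ξ : Fin n → ℝ, ξ ≠ 0 → p (c • ξ) = c * p ξ)
    (hhom' : ∀ c : ℝ, 0 < c → ∀ ξ : Fin n → ℝ, ξ ≠ 0 → pstar (c • ξ) = c * pstar ξ)
    (heuler : ∀ ξ : Fin n → ℝ, ξ ≠ 0 → p ξ = ∑ i, pgrad p ξ i * ξ i)
    (hdual : ∀ ξ : Fin n → ℝ, ξ ≠ 0 → pgrad pstar (pgrad p ξ) = (p ξ)⁻¹ • ξ)
    (hker : ∀ η : Fin n → ℝ, η ≠ 0 →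
      {x : Fin n → ℝ | Matrix.vecMul x (phess pstar η) = 0} =
        (Submodule.span ℝ {η} : Submodule ℝ (Fin n → ℝ)))
    (hsym : ∀ η : Fin n → ℝ, η ≠ 0 → (phess pstar η).IsSymm) :
    ∀ (x ξ : Fin n → ℝ), ξ ≠ 0 →
      ((∀ i j : Fin n, Omega p pstar x ξ i j = 0) ↔ ∃ c : ℝ, x = c • pgrad p ξ) := by
  intro x ξ hξ
  have hpξ : 0 < p ξ := hpos ξ hξ
  set η := pgrad p ξ with hηdef
  set H := phess pstar η with hHdef
  have hη : η ≠ 0 := by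
    intro h
    have he := heuler ξ hξ
    have hz : (∑ i, pgrad p ξ i * ξ i) = 0 := by
      apply Finset.sum_eq_zero
      intro i _
      have : pgrad p ξ i = 0 := by rw [← hηdef, h]; rfl
      simp [this]
    rw [hz] at he
    exact absurd he (ne_of_gt hpξ)
  have hmem : ∀ y : Fin n → ℝ,
      Matrix.vecMul y H = 0 ↔ y ∈ Submodule.span ℝ {η} := by
    intro y
    have := Set.ext_iff.mp (hker η hη) y
    simpa using this
  have hηH : Matrix.vecMul η H = 0 :=
    (hmem η).mpr (Submodule.mem_span_singleton_self η)
  have hHent : ∀ i j, H i j = H j i := fun i j => (hsym η hη).apply j i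
  constructor
  · -- Ω = 0 → ∃ c
    intro hΩ
    set v := Matrix.vecMul x H with hvdef
    have hv : ∀ i j, v i * η j = v j * η i := by
      intro i j
      have h0 := hΩ i j
      unfold Omega at h0
      rw [← hηdef, ← hHdef, ← hvdef] at h0
      have h1 : p ξ * (v i * η j) = p ξ * (v j * η i) := by nlinarith [h0]
      exact mul_left_cancel₀ (ne_of_gt hpξ) h1
    obtain ⟨k, hk0⟩ := Function.ne_iff.mp hη
    have hk : η k ≠ 0 := hk0
    have hvt : ∀ i, v i = (v k / η k) * η i := by
      intro i
      rw [div_mul_eq_mul_div, eq_div_iff hk]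
      exact hv i k
    have hstep : ∑ i, v i * η i = ∑ j, x j * Matrix.vecMul η H j := by
      calc ∑ i, v i * η i
          = ∑ i, ∑ j, x j * H j i * η i := by
            apply Finset.sum_congr rfl
            intro i _
            rw [hvdef]
            simp [Matrix.vecMul, dotProduct, Finset.sum_mul]
        _ = ∑ j, ∑ i, x j * (η i * H i j) := by
            rw [Finset.sum_comm]
            apply Finset.sum_congr rfl
            intro j _
            apply Finset.sum_congr rfl
            intro i _
            rw [hHent i j]
            ring
        _ = ∑ j, x j * Matrix.vecMul η H j := by
            apply Finset.sum_congr rfl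
            intro j _
            rw [← Finset.mul_sum]
            congr 1
    have hsum0 : ∑ i, v i * η i = 0 := by
      rw [hstep, hηH]
      simp
    have hsum0' : (v k / η k) * ∑ i, η i * η i = 0 := by
      rw [Finset.mul_sum, ← hsum0]
      apply Finset.sum_congr rfl
      intro i _
      rw [hvt i]; ring
    have hηsq : (∑ i, η i * η i) ≠ 0 := by
      have : 0 < ∑ i, η i * η i := by
        apply Finset.sum_pos' (fun i _ => mul_self_nonneg _)
        exact ⟨k, Finset.mem_univ k, mul_self_pos.mpr hk⟩
      exact ne_of_gt this
    have ht : v k / η k = 0 := by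
      rcases mul_eq_zero.mp hsum0' with h | h
      · exact h
      · exact absurd h hηsq
    have hv0 : Matrix.vecMul x H = 0 := by
      funext i
      have := hvt i
      rw [ht, zero_mul] at this
      rw [← hvdef]
      simp [this]
    obtain ⟨c, hc⟩ := Submodule.mem_span_singleton.mp ((hmem x).mp hv0)
    exact ⟨c, hc.symm⟩
  · -- ∃ c → Ω = 0
    rintro ⟨c, rfl⟩
    intro i j
    have hx : Matrix.vecMul (c • η) H = 0 := by
      rw [Matrix.smul_vecMul, hηH, smul_zero]
    unfold Omega
    rw [← hηdef, ← hHdef, hx]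
    simp
end

section
/- Let p* ∈ C^∞(ℝⁿ\{0}) be homogeneous of degree 1 with η ∈ Ker ∇²p*(η) for all η ≠ 0. For each i < j define Ω_{ij}(x,ξ) as the (i,j)-component of (x∇²p*(∇p(ξ))) ∧ (p(ξ)∇p(ξ)). Then ∇_x Ω_{ij}(x,ξ) · ∇p(ξ) = 0 for all x ∈ ℝⁿ and ξ ≠ 0. -/
/-- Derivative of a linear function `z ↦ ∑ k, z k * b k`. -/
lemma fderiv_linear_single {n : ℕ} (b : Fin n → ℝ) (x : Fin n → ℝ) (m : Fin n) :
    fderiv ℝ (fun z : Fin n → ℝ => ∑ k, z k * b k) x (Pi.single m 1) = b m := by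
  have hF : HasFDerivAt (fun z : Fin n → ℝ => ∑ k, z k * b k)
      (∑ k, b k • (ContinuousLinearMap.proj k : (Fin n → ℝ) →L[ℝ] ℝ)) x := by
    apply HasFDerivAt.fun_sum
    intro k _
    simpa [smul_smul] using
      ((ContinuousLinearMap.proj k : (Fin n → ℝ) →L[ℝ] ℝ).hasFDerivAt (x := x)).mul_const (b k)
  rw [hF.fderiv]
  simp [ContinuousLinearMap.sum_apply, ContinuousLinearMap.proj_apply, Pi.single_apply,
    mul_ite, Finset.sum_ite_eq, smul_eq_mul]

/-- If `η ∈ Ker ∇²p*(η)` for all `η ≠ 0`, then `∇_x Ω_{ij}(x,ξ) · ∇p(ξ) = 0` for all `x`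
and `ξ ≠ 0`; i.e. `Ω_{ij}` Poisson-commutes with functions of `p`. -/
theorem stmt6 {n : ℕ} (hn : 2 ≤ n) (p pstar : (Fin n → ℝ) → ℝ)
    (hsmooth : ContDiffOn ℝ (⊤ : ℕ∞) p {ξ : Fin n → ℝ | ξ ≠ 0})
    (hsmooth' : ContDiffOn ℝ (⊤ : ℕ∞) pstar {ξ : Fin n → ℝ | ξ ≠ 0})
    (hhom : ∀ c : ℝ, 0 < c → ∀ ξ : Fin n → ℝ, ξ ≠ 0 → p (c • ξ) = c * p ξ)
    (hhom' : ∀ c : ℝ, 0 < c → ∀ ξ : Fin n → ℝ, ξ ≠ 0 → pstar (c • ξ) = c * pstar ξ)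
    (hsym : ∀ η : Fin n → ℝ, η ≠ 0 → (phess pstar η).IsSymm)
    (hker : ∀ η : Fin n → ℝ, η ≠ 0 → Matrix.vecMul η (phess pstar η) = 0) :
    ∀ (x ξ : Fin n → ℝ), ξ ≠ 0 → ∀ i j : Fin n,
      ∑ k, fderiv ℝ (fun z => Omega p pstar z ξ i j) x (Pi.single k 1) * pgrad p ξ k = 0 := by
  intro x ξ hξ i j
  set g : Fin n → ℝ := pgrad p ξ with hg
  set H : Matrix (Fin n) (Fin n) ℝ := phess pstar g with hH
  set b : Fin n → ℝ := fun k => H k i * (p ξ * g j) - H k j * (p ξ * g i) with hb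
  have hOm : (fun z => Omega p pstar z ξ i j) = fun z : Fin n → ℝ => ∑ k, z k * b k := by
    funext z
    simp only [Omega, Matrix.vecMul, dotProduct, ← hg, ← hH, hb]
    rw [Finset.sum_mul, Finset.sum_mul, ← Finset.sum_sub_distrib]
    apply Finset.sum_congr rfl
    intro k _
    ring
  have hvm : Matrix.vecMul g H = 0 := by
    by_cases h0 : g = 0
    · rw [h0]; exact Matrix.zero_vecMul H
    · exact hker g h0
  have hsum : ∀ k, fderiv ℝ (fun z => Omega p pstar z ξ i j) x (Pi.single k 1) = b k := by
    intro k
    rw [hOm]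
    exact fderiv_linear_single b x k
  simp only [hsum, hb]
  have h1 : ∑ k, g k * H k i = 0 := congrFun hvm i
  have h2 : ∑ k, g k * H k j = 0 := congrFun hvm j
  calc ∑ k, (H k i * (p ξ * g j) - H k j * (p ξ * g i)) * g k
      = (∑ k, g k * H k i) * (p ξ * g j) - (∑ k, g k * H k j) * (p ξ * g i) := by
        rw [Finset.sum_mul, Finset.sum_mul, ← Finset.sum_sub_distrib]
        apply Finset.sum_congr rfl; intro k _; ring
    _ = 0 := by rw [h1, h2]; ring
end
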